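/- arXiv:1504.07108 — 2 statements merged into one kernel-verified Lean document; each statement's English description precedes it below -/
import Mathlib

section
/- Let n ≥ 1 and let p, t, a_1, …, a_6 be nonzero complex numbers with |p| < 1, with parameters generic so that the reference points ζ^{(s)} are not poles of any F_i^−. Then for every 1 ≤ i ≤ n and every 0 ≤ s ≤ n, F_i^−(ζ^{(s)}) = 0. -/
open Finset

/-- The theta function `θ(z;p) = ∏_{i≥0} (1 - p^i z)(1 - p^{i+1}/z)`. -/
noncomputable def theta (p z : ℂ) : ℂ :=
  ∏' i : ℕ, ((1 - p ^ i * z) * (1 - p ^ (i + 1) * z⁻¹))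

/-- The theta shifted factorial `θ(z;p;q)_k = ∏_{j=0}^{k-1} θ(q^j z;p)`. -/
noncomputable def thetaPoch (p q z : ℂ) (k : ℕ) : ℂ :=
  ∏ j ∈ Finset.range k, theta p (q ^ j * z)

/-- `θ(x u^{±1};p) = θ(xu;p) θ(x/u;p)`. -/
noncomputable def thetaPm (p x u : ℂ) : ℂ :=
  theta p (x * u) * theta p (x * u⁻¹)

/-- The fundamental `BC_n` invariant `E_r(a₁,a₂;z)`, as a sum over the subsets
`S = {i_1 < … < i_r}` of `{0,…,n-1}` (0-based indexing); for `i ∈ S`,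
`(S.filter (· < i)).card` is the (0-based) rank of `i` in `S`. -/
noncomputable def Efun (p t a₁ a₂ : ℂ) {n : ℕ} (r : ℕ) (z : Fin n → ℂ) : ℂ :=
  ∑ S ∈ Finset.powersetCard r (Finset.univ : Finset (Fin n)),
    (∏ i ∈ S,
        thetaPm p (a₂ * t ^ ((i : ℕ) - (S.filter (fun j => j < i)).card)) (z i) /
          thetaPm p (a₂ * t ^ ((i : ℕ) - (S.filter (fun j => j < i)).card))
            (a₁ * t ^ (S.filter (fun j => j < i)).card)) *
    (∏ i ∈ Sᶜ,
        thetaPm p (a₁ * t ^ ((i : ℕ) - (Sᶜ.filter (fun j => j < i)).card)) (z i) /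
          thetaPm p (a₁ * t ^ ((i : ℕ) - (Sᶜ.filter (fun j => j < i)).card))
            (a₂ * t ^ (Sᶜ.filter (fun j => j < i)).card))

/-- Genericity: all theta denominators appearing in the fundamental invariants are nonzero. -/
def eDenomsNZ (p t a₁ a₂ : ℂ) (n : ℕ) : Prop :=
  ∀ k l : ℕ, k < n → l < n →
    thetaPm p (a₂ * t ^ k) (a₁ * t ^ l) ≠ 0 ∧ thetaPm p (a₁ * t ^ k) (a₂ * t ^ l) ≠ 0

/-- The reference point `ζ^{(s)} = (a₁, a₁t, …, a₁ t^{s-1}, a₂, a₂ t, …, a₂ t^{n-s-1})`. -/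
noncomputable def zetaPt (a₁ a₂ t : ℂ) (n s : ℕ) : Fin n → ℂ :=
  fun i => if (i : ℕ) < s then a₁ * t ^ (i : ℕ) else a₂ * t ^ ((i : ℕ) - s)

/-- `F_i^+(z)`. -/
noncomputable def Fplus (p t : ℂ) (a : Fin 6 → ℂ) {n : ℕ} (i : Fin n) (z : Fin n → ℂ) : ℂ :=
  ((∏ m : Fin 6, theta p (a m * z i)) / ((z i) ^ 2 * theta p ((z i) ^ 2))) *
    ∏ j ∈ Finset.univ.erase i, thetaPm p (t * z i) (z j) / thetaPm p (z i) (z j)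

/-- `F_i^-(z) = F_i^+(z_1, …, z_i⁻¹, …, z_n)`. -/
noncomputable def Fminus (p t : ℂ) (a : Fin 6 → ℂ) {n : ℕ} (i : Fin n) (z : Fin n → ℂ) : ℂ :=
  Fplus p t a i (Function.update z i (z i)⁻¹)

/-- None of the theta denominators of `F_i^+` vanishes at `z`. -/
def FplusDenomNZ (p : ℂ) {n : ℕ} (i : Fin n) (z : Fin n → ℂ) : Prop :=
  theta p ((z i) ^ 2) ≠ 0 ∧ ∀ j, j ≠ i → thetaPm p (z i) (z j) ≠ 0

/-- None of the theta denominators of `F_i^-` vanishes at `z`. -/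
def FminusDenomNZ (p : ℂ) {n : ℕ} (i : Fin n) (z : Fin n → ℂ) : Prop :=
  FplusDenomNZ p i (Function.update z i (z i)⁻¹)

/-- `h_r(z) = Σ_i (F_i^-(z) + F_i^+(z)) E_{r-1}^{(n-1)}(z_1,…,ẑ_i,…,z_n)`, in `n+1` variables. -/
noncomputable def hFun (p t : ℂ) (a : Fin 6 → ℂ) (n r : ℕ) (z : Fin (n + 1) → ℂ) : ℂ :=
  ∑ i : Fin (n + 1),
    (Fminus p t a i z + Fplus p t a i z) *
      Efun p t (a 0) (a 1) (r - 1) (fun j : Fin n => z (i.succAbove j))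

/-- The base point `ξ = (a₁, a₁ t, …, a₁ t^{n-1})`. -/
noncomputable def xiPt (a₁ t : ℂ) (n : ℕ) : Fin n → ℂ := fun i => a₁ * t ^ (i : ℕ)

/-- The weight `W(ν) = Φ(q^ν ξ)/Φ(ξ)` of the truncated Jackson integral. -/
noncomputable def weight (p q t : ℂ) (a : Fin 6 → ℂ) (n : ℕ) (ν : Fin n → ℕ) : ℂ :=
  (∏ i : Fin n,
      (q ^ 2 * (a 0 * a 1 * a 2 * a 3 * a 4 * a 5 * t ^ (2 * n - 2))⁻¹ *
            t ^ (2 * (n - 1 - (i : ℕ)))) ^ ν i *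
        theta p (q ^ (2 * ν i) * xiPt (a 0) t n i ^ 2) / theta p (xiPt (a 0) t n i ^ 2)) *
  (∏ j : Fin n, ∏ k ∈ Finset.Ioi j,
      theta p (q ^ (ν k - ν j) * (xiPt (a 0) t n k / xiPt (a 0) t n j)) *
          theta p (q ^ (ν j + ν k) * (xiPt (a 0) t n j * xiPt (a 0) t n k)) /
        (theta p (xiPt (a 0) t n k / xiPt (a 0) t n j) *
          theta p (xiPt (a 0) t n j * xiPt (a 0) t n k))) *
  (∏ i : Fin n, ∏ m : Fin 6,
      thetaPoch p q (a m * xiPt (a 0) t n i) (ν i) /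
        thetaPoch p q (q * (a m)⁻¹ * xiPt (a 0) t n i) (ν i)) *
  (∏ j : Fin n, ∏ k ∈ Finset.Ioi j,
      thetaPoch p q (t * (xiPt (a 0) t n k / xiPt (a 0) t n j)) (ν k - ν j) *
          thetaPoch p q (t * (xiPt (a 0) t n j * xiPt (a 0) t n k)) (ν j + ν k) /
        (thetaPoch p q (q * t⁻¹ * (xiPt (a 0) t n k / xiPt (a 0) t n j)) (ν k - ν j) *
          thetaPoch p q (q * t⁻¹ * (xiPt (a 0) t n j * xiPt (a 0) t n k)) (ν j + ν k)))

/-- The truncated Jackson integral `⟨φ⟩ = Σ_{0 ≤ ν₁ ≤ … ≤ ν_n ≤ N} W(ν) φ(q^ν ξ)`. -/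
noncomputable def jackson (p q t : ℂ) (a : Fin 6 → ℂ) (n N : ℕ)
    (φ : (Fin n → ℂ) → ℂ) : ℂ :=
  ∑ ν ∈ Finset.univ.filter
      (fun ν : Fin n → Fin (N + 1) => ∀ i j : Fin n, i ≤ j → ν i ≤ ν j),
    weight p q t a n (fun i => (ν i : ℕ)) *
      φ (fun i => q ^ (ν i : ℕ) * xiPt (a 0) t n i)

/-- Genericity: all theta denominators appearing in the weight `W(ν)`,
for `0 ≤ ν₁ ≤ … ≤ ν_n ≤ N`, are nonzero. -/
def weightDenomsNZ (p q t : ℂ) (a : Fin 6 → ℂ) (n N : ℕ) : Prop :=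
  (∀ i : Fin n, theta p (xiPt (a 0) t n i ^ 2) ≠ 0) ∧
  (∀ j k : Fin n, j < k →
      theta p (xiPt (a 0) t n k / xiPt (a 0) t n j) ≠ 0 ∧
        theta p (xiPt (a 0) t n j * xiPt (a 0) t n k) ≠ 0) ∧
  (∀ (m : Fin 6) (i : Fin n) (k : ℕ), k ≤ N →
      thetaPoch p q (q * (a m)⁻¹ * xiPt (a 0) t n i) k ≠ 0) ∧
  (∀ j k : Fin n, j < k → ∀ l : ℕ, l ≤ 2 * N →
      thetaPoch p q (q * t⁻¹ * (xiPt (a 0) t n k / xiPt (a 0) t n j)) l ≠ 0 ∧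
        thetaPoch p q (q * t⁻¹ * (xiPt (a 0) t n j * xiPt (a 0) t n k)) l ≠ 0)

/-! `θ(1; p) = 0`, and at `ζ^{(s)}` the inversion of `z_i` always produces the argument `1`
in some theta factor of the numerator of `F_i^+`: for the first coordinate of a block,
`z_i = a_m` makes `θ(a_m z_i^{-1}) = θ(1)`; otherwise `z_i = t z_{i-1}` makes
`θ(t z_i^{-1} z_{i-1}) = θ(1)`. -/

theorem theta_one (p : ℂ) : theta p 1 = 0 :=
  tprod_of_exists_eq_zero ⟨0, by simp⟩

section Fplus

variable (p t : ℂ) (a : Fin 6 → ℂ) {n : ℕ} (i : Fin n) (z : Fin n → ℂ)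

theorem Fplus_eq_zero_of_mul_eq_one {m : Fin 6} (h : a m * z i = 1) : Fplus p t a i z = 0 := by
  rw [Fplus, prod_eq_zero (mem_univ m) (by rw [h, theta_one]), zero_div, zero_mul]

theorem Fplus_eq_zero_of_mul_mul_eq_one {j : Fin n} (hj : j ≠ i) (h : t * z i * z j = 1) :
    Fplus p t a i z = 0 := by
  have hzero : thetaPm p (t * z i) (z j) = 0 := by rw [thetaPm, h, theta_one, zero_mul]
  rw [Fplus, prod_eq_zero (mem_erase.mpr ⟨hj, mem_univ j⟩) (by rw [hzero, zero_div]), mul_zero]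

theorem Fminus_eq_zero_of_eq {m : Fin 6} (ha : a m ≠ 0) (h : z i = a m) :
    Fminus p t a i z = 0 :=
  Fplus_eq_zero_of_mul_eq_one p t a i _ (m := m) (by simp [h, ha])

theorem Fminus_eq_zero_of_mul_eq {j : Fin n} (hj : j ≠ i) (hz : z i ≠ 0) (h : t * z j = z i) :
    Fminus p t a i z = 0 :=
  Fplus_eq_zero_of_mul_mul_eq_one p t a i _ hj <| by
    rw [Function.update_self, Function.update_of_ne hj, mul_right_comm, h, mul_inv_cancel₀ hz]

end Fplus

section zetaPt

variable {a₁ a₂ t : ℂ} {n s : ℕ}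

theorem zetaPt_of_lt {i : Fin n} (h : (i : ℕ) < s) :
    zetaPt a₁ a₂ t n s i = a₁ * t ^ (i : ℕ) :=
  if_pos h

theorem zetaPt_of_le {i : Fin n} (h : s ≤ i) :
    zetaPt a₁ a₂ t n s i = a₂ * t ^ ((i : ℕ) - s) :=
  if_neg h.not_gt

theorem zetaPt_ne_zero (h₁ : a₁ ≠ 0) (h₂ : a₂ ≠ 0) (ht : t ≠ 0) (i : Fin n) :
    zetaPt a₁ a₂ t n s i ≠ 0 := by
  unfold zetaPt
  split_ifs <;> simp [*]

theorem mul_zetaPt_of_val_eq_succ {i j : Fin n} (hij : (i : ℕ) = j + 1) (hs : (i : ℕ) ≠ s) :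
    t * zetaPt a₁ a₂ t n s j = zetaPt a₁ a₂ t n s i := by
  rcases lt_or_ge (i : ℕ) s with h | h
  · rw [zetaPt_of_lt h, zetaPt_of_lt (by omega), hij]
    ring
  · rw [zetaPt_of_le h, zetaPt_of_le (by omega), show (i : ℕ) - s = (j - s) + 1 by omega]
    ring

end zetaPt

theorem Fminus_vanishes_at_zeta_general (n : ℕ) (p t : ℂ) (a : Fin 6 → ℂ)
    (ht : t ≠ 0) (ha : ∀ m, a m ≠ 0)
    (i : Fin n) (s : ℕ) :
    Fminus p t a i (zetaPt (a 0) (a 1) t n s) = 0 := by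
  by_cases his : (i : ℕ) = s
  · exact Fminus_eq_zero_of_eq p t a i _ (ha 1) (by simp [zetaPt_of_le his.ge, his])
  by_cases hi0 : (i : ℕ) = 0
  · have hlt : (i : ℕ) < s := by omega
    exact Fminus_eq_zero_of_eq p t a i _ (ha 0) (by simp [zetaPt_of_lt hlt, hi0])
  obtain ⟨k, hik⟩ := Nat.exists_eq_add_one_of_ne_zero hi0
  let j : Fin n := ⟨k, by omega⟩
  have hji : j ≠ i := Fin.ne_of_val_ne (by simp only [j]; omega)
  exact Fminus_eq_zero_of_mul_eq p t a i _ hji (zetaPt_ne_zero (ha 0) (ha 1) ht i)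
    (mul_zetaPt_of_val_eq_succ hik his)

/-- `F_i^-(ζ^{(s)}) = 0` for all `i` and all `0 ≤ s ≤ n`. -/
theorem Fminus_vanishes_at_zeta (n : ℕ) (hn : 1 ≤ n) (p t : ℂ) (a : Fin 6 → ℂ)
    (hp : ‖p‖ < 1) (hp0 : p ≠ 0) (ht : t ≠ 0) (ha : ∀ m, a m ≠ 0)
    (i : Fin n) (s : ℕ) (hs : s ≤ n)
    (hgen : FminusDenomNZ p i (zetaPt (a 0) (a 1) t n s)) :
    Fminus p t a i (zetaPt (a 0) (a 1) t n s) = 0 :=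
  Fminus_vanishes_at_zeta_general n p t a ht ha i s
end

section
/- Let n ≥ 2, 1 ≤ r ≤ n, let ε ∈ {+, −}, and let p, t, a_1, …, a_6 be nonzero complex numbers with |p| < 1, with parameters generic so that all theta denominators in the fundamental invariants are nonzero. Fix w, z_3, …, z_n in ℂ* generic (so that all theta denominators other than θ(z_1 z_2^{−1}; p) and θ(z_2 z_1^{−1}; p) are nonzero at the relevant points). Then the function z_1 ↦ θ(z_1/w; p) · [F_1^ε(z_1, w, z_3, …, z_n) · E_{r−1}^{(n−1)}(a_1, a_2; w, z_3, …, z_n) + F_2^ε(z_1, w, z_3, …, z_n) · E_{r−1}^{(n−1)}(a_1, a_2; z_1, z_3, …, z_n)] tends to 0 as z_1 → w. -/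
open Finset

/-!
Each of the two terms has a simple pole along `z₁ = w`: `F₁^ε` through the factor `θ(z₁/w)` or
`θ(w/z₁)` of its denominator, `F₂^ε` through the other one. By the inversion formula
`θ(w/z) = -(w/z) θ(z/w)`, after multiplication by `θ(z₁/w)` the sum becomes
`B(z₁) - (z₁/w) A(z₁)` with `A, B` continuous at `w` and `A(w) = B(w)` (the two cleared terms
differ only by swapping `z₁` and `w`), so it tends to `0`. The inversion formula and the continuity
of `θ` on `ℂ*` both come from the factorisation `θ(z) = (z;p)_∞ (p/z;p)_∞`, the infinite product
`(u;p)_∞` converging uniformly on compact sets.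
-/

open Filter Topology

noncomputable def qPochInf (p u : ℂ) : ℂ := ∏' i : ℕ, (1 - p ^ i * u)

section Theta

variable {p : ℂ}

lemma multipliable_one_sub_pow_mul (hp : ‖p‖ < 1) (u : ℂ) :
    Multipliable fun i : ℕ => 1 - p ^ i * u := by
  simpa [sub_eq_add_neg] using multipliable_one_add_of_summable (f := fun i : ℕ => -(p ^ i * u))
    (by simpa using (summable_geometric_of_lt_one (norm_nonneg p) hp).mul_right ‖u‖)

lemma theta_eq_qPochInf_mul (hp : ‖p‖ < 1) (z : ℂ) :
    theta p z = qPochInf p z * qPochInf p (p * z⁻¹) := by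
  have hshift : ∀ i : ℕ, 1 - p ^ (i + 1) * z⁻¹ = 1 - p ^ i * (p * z⁻¹) := fun i => by ring
  simp only [theta, qPochInf, ← hshift]
  exact (multipliable_one_sub_pow_mul hp z).tprod_mul
    ((multipliable_one_sub_pow_mul hp (p * z⁻¹)).congr fun i => (hshift i).symm)

lemma qPochInf_eq_one_sub_mul (hp : ‖p‖ < 1) (u : ℂ) :
    qPochInf p u = (1 - u) * qPochInf p (p * u) := by
  have hshift : ∀ i : ℕ, 1 - p ^ (i + 1) * u = 1 - p ^ i * (p * u) := fun i => by ring
  rw [qPochInf, tprod_eq_zero_mul' ((multipliable_one_sub_pow_mul hp (p * u)).congr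
    fun i => (hshift i).symm)]
  simp [qPochInf, hshift]

lemma theta_inv (hp : ‖p‖ < 1) {x : ℂ} (hx : x ≠ 0) : theta p x = -x * theta p x⁻¹ := by
  rw [theta_eq_qPochInf_mul hp, theta_eq_qPochInf_mul hp, inv_inv, qPochInf_eq_one_sub_mul hp x,
    qPochInf_eq_one_sub_mul hp x⁻¹]
  field_simp
  ring

lemma continuous_qPochInf (hp : ‖p‖ < 1) : Continuous (qPochInf p) := by
  refine continuous_iff_continuousAt.2 fun u₀ => ?_
  have hprod := Summable.hasProdUniformlyOn_nat_one_add (isCompact_closedBall (0 : ℂ) (‖u₀‖ + 1))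
    (f := fun i u => -(p ^ i * u))
    ((summable_geometric_of_lt_one (norm_nonneg p) hp).mul_right (‖u₀‖ + 1))
    (Eventually.of_forall fun i u hu => by
      rw [norm_neg, norm_mul, norm_pow]
      exact mul_le_mul_of_nonneg_left (mem_closedBall_zero_iff.1 hu) (by positivity))
    (fun i => by fun_prop)
  simp only [← sub_eq_add_neg] at hprod
  exact (hprod.tendstoUniformlyOn_finsetRange.continuousOn
    (Frequently.of_forall fun N => by fun_prop)).continuousAt
    (Metric.closedBall_mem_nhds_of_mem (by simp))

lemma continuousAt_theta (hp : ‖p‖ < 1) {z : ℂ} (hz : z ≠ 0) : ContinuousAt (theta p) z := by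
  rw [funext (theta_eq_qPochInf_mul hp)]
  have := continuous_qPochInf hp
  fun_prop (disch := exact hz)

variable {X : Type*} [TopologicalSpace X] {f g : X → ℂ} {x : X}

@[fun_prop]
lemma ContinuousAt.theta (hp : ‖p‖ < 1) (hf : ContinuousAt f x) (h0 : f x ≠ 0) :
    ContinuousAt (fun y => _root_.theta p (f y)) x :=
  (continuousAt_theta hp h0).comp hf

@[fun_prop]
lemma ContinuousAt.thetaPm (hp : ‖p‖ < 1) (hf : ContinuousAt f x) (hg : ContinuousAt g x)
    (hf0 : f x ≠ 0) (hg0 : g x ≠ 0) : ContinuousAt (fun y => _root_.thetaPm p (f y) (g y)) x := by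
  unfold _root_.thetaPm
  fun_prop (disch := simp [*])

end Theta

section Continuity

variable {p t a₁ a₂ : ℂ} {n : ℕ}

lemma continuousAt_Efun (hp : ‖p‖ < 1) (ht : t ≠ 0) (h₁ : a₁ ≠ 0) (h₂ : a₂ ≠ 0) (r : ℕ)
    {z : Fin n → ℂ} (hz : ∀ i, z i ≠ 0) : ContinuousAt (Efun p t a₁ a₂ r) z := by
  have hθ : ∀ (b : ℂ) (k : ℕ) (i : Fin n), b ≠ 0 →
      ContinuousAt (fun y : Fin n → ℂ => thetaPm p (b * t ^ k) (y i)) z := fun b k i hb =>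
    continuousAt_const.thetaPm hp (continuous_apply i).continuousAt (by simp [*]) (hz i)
  exact tendsto_finsetSum _ fun S _ => ContinuousAt.mul
    (tendsto_finsetProd _ fun i _ => (hθ _ _ i h₂).div_const _)
    (tendsto_finsetProd _ fun i _ => (hθ _ _ i h₁).div_const _)

lemma continuousAt_Efun_cons (hp : ‖p‖ < 1) (ht : t ≠ 0) (h₁ : a₁ ≠ 0) (h₂ : a₂ ≠ 0) (r : ℕ)
    {w : ℂ} (hw : w ≠ 0) {zs : Fin n → ℂ} (hzs : ∀ j, zs j ≠ 0) :
    ContinuousAt (fun z => Efun p t a₁ a₂ r (Fin.cons z zs)) w :=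
  (continuousAt_Efun hp ht h₁ h₂ r (z := Fin.cons w zs) (Fin.cases hw hzs)).comp
    (f := fun z : ℂ => (Fin.cons z zs : Fin (n + 1) → ℂ)) (by fun_prop)

end Continuity

lemma tendsto_theta_mul_add_div_theta {p : ℂ} (hp : ‖p‖ < 1) {w : ℂ} (hw : w ≠ 0) {A B : ℂ → ℂ}
    (hA : ContinuousAt A w) (hB : ContinuousAt B w) (hAB : A w = B w) :
    Tendsto (fun z => theta p (z / w) * (A z / theta p (w / z) + B z / theta p (z / w)))
      (𝓝[≠] w) (𝓝 0) := by
  have hrewrite : ∀ z ≠ 0, theta p (z / w) * (A z / theta p (w / z) + B z / theta p (z / w)) =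
      theta p (z / w) / theta p (z / w) * (B z - z / w * A z) := fun z hz => by
    rw [theta_inv hp (div_ne_zero hw hz), inv_div]
    simp only [div_eq_mul_inv, mul_inv, inv_inv, inv_neg]
    ring
  have hlim : Tendsto (fun z => ‖B z - z / w * A z‖) (𝓝 w) (𝓝 0) := by
    have hcont : ContinuousAt (fun z => ‖B z - z / w * A z‖) w := by fun_prop
    simpa [div_self hw, hAB] using hcont.tendsto
  refine squeeze_zero_norm' ?_ (hlim.mono_left nhdsWithin_le_nhds)
  filter_upwards [nhdsWithin_le_nhds (eventually_ne_nhds hw)] with z hz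
  rw [hrewrite z hz, norm_mul]
  -- `θ(z/w)/θ(z/w)` is `0` or `1`, so nothing about the zeros of `θ` near `1` is needed.
  exact mul_le_of_le_one_left (norm_nonneg _) (by
    rcases eq_or_ne (theta p (z / w)) 0 with h | h <;> simp [h])

lemma Fin.prod_univ_erase {M : Type*} [CommMonoid M] {n : ℕ} (f : Fin (n + 1) → M)
    (i : Fin (n + 1)) : ∏ j ∈ univ.erase i, f j = ∏ j : Fin n, f (i.succAbove j) := by
  rw [← compl_singleton, ← Fin.image_succAbove_univ, prod_image Fin.succAbove_right_injective.injOn]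

/-- `F₁^+(u, v, zs)` with the factor `θ(u v^{±1}; p)` of its denominator cleared. -/
noncomputable def FplusCleared (p t : ℂ) (a : Fin 6 → ℂ) {n : ℕ} (u v : ℂ) (zs : Fin n → ℂ) : ℂ :=
  (∏ m : Fin 6, theta p (a m * u)) / (u ^ 2 * theta p (u ^ 2)) * thetaPm p (t * u) v *
    ∏ j : Fin n, thetaPm p (t * u) (zs j) / thetaPm p u (zs j)

section Cleared

variable {p t : ℂ} (a : Fin 6 → ℂ) {n : ℕ}

section Cons

variable (p t) (u v : ℂ) (zs : Fin n → ℂ)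

lemma Fplus_cons_cons_zero :
    Fplus p t a 0 (Fin.cons u (Fin.cons v zs)) = FplusCleared p t a u v zs / thetaPm p u v := by
  rw [Fplus, Fin.prod_univ_erase, FplusCleared]
  simp only [Fin.zero_succAbove, Fin.prod_univ_succ, Fin.cons_zero, Fin.cons_succ]
  ring

lemma Fplus_cons_cons_one :
    Fplus p t a 1 (Fin.cons u (Fin.cons v zs)) = FplusCleared p t a v u zs / thetaPm p v u := by
  rw [Fplus, Fin.prod_univ_erase, FplusCleared]
  simp only [Fin.prod_univ_succ, Fin.one_succAbove_zero, Fin.one_succAbove_succ, Fin.cons_zero,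
    Fin.cons_succ, Fin.cons_one]
  ring

lemma Fminus_cons_cons_zero :
    Fminus p t a 0 (Fin.cons u (Fin.cons v zs)) = Fplus p t a 0 (Fin.cons u⁻¹ (Fin.cons v zs)) := by
  rw [Fminus, Fin.cons_zero, Fin.update_cons_zero]

lemma Fminus_cons_cons_one :
    Fminus p t a 1 (Fin.cons u (Fin.cons v zs)) = Fplus p t a 1 (Fin.cons u (Fin.cons v⁻¹ zs)) := by
  rw [Fminus, Fin.cons_one, Fin.cons_zero, ← Fin.succ_zero_eq_one, ← Fin.cons_update,
    Fin.update_cons_zero]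

end Cons

lemma continuousAt_FplusCleared_left (hp : ‖p‖ < 1) (ht : t ≠ 0) (ha : ∀ m, a m ≠ 0) {u v : ℂ}
    {zs : Fin n → ℂ} (hu : u ≠ 0) (hv : v ≠ 0) (hzs : ∀ j, zs j ≠ 0) (hu2 : theta p (u ^ 2) ≠ 0)
    (huz : ∀ j, thetaPm p u (zs j) ≠ 0) :
    ContinuousAt (fun x => FplusCleared p t a x v zs) u := by
  unfold FplusCleared
  fun_prop (disch := simp [*])

lemma continuousAt_FplusCleared_right (hp : ‖p‖ < 1) (ht : t ≠ 0) {u v : ℂ} {zs : Fin n → ℂ}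
    (hu : u ≠ 0) (hv : v ≠ 0) : ContinuousAt (fun x => FplusCleared p t a u x zs) v := by
  unfold FplusCleared
  fun_prop (disch := simp [*])

variable {r : ℕ} {w : ℂ} {zs : Fin n → ℂ}

lemma tendsto_theta_mul_Fplus_pair (hp : ‖p‖ < 1) (ht : t ≠ 0) (ha : ∀ m, a m ≠ 0) (hw : w ≠ 0)
    (hzs : ∀ j, zs j ≠ 0) (hw2 : theta p (w ^ 2) ≠ 0) (hwz : ∀ j, thetaPm p w (zs j) ≠ 0) :
    Tendsto (fun z => theta p (z / w) *
        (Fplus p t a 0 (Fin.cons z (Fin.cons w zs)) * Efun p t (a 0) (a 1) (r - 1) (Fin.cons w zs) +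
          Fplus p t a 1 (Fin.cons z (Fin.cons w zs)) * Efun p t (a 0) (a 1) (r - 1) (Fin.cons z zs)))
      (𝓝[≠] w) (𝓝 0) := by
  simp only [Fplus_cons_cons_zero, Fplus_cons_cons_one]
  convert tendsto_theta_mul_add_div_theta hp hw
    (A := fun z => FplusCleared p t a w z zs * Efun p t (a 0) (a 1) (r - 1) (Fin.cons z zs) /
      theta p (w * z))
    (B := fun z => FplusCleared p t a z w zs * Efun p t (a 0) (a 1) (r - 1) (Fin.cons w zs) /
      theta p (z * w)) ?_ ?_ rfl using 2 with z
  · rw [thetaPm, thetaPm, ← div_eq_mul_inv z w, ← div_eq_mul_inv w z]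
    ring
  · exact ((continuousAt_FplusCleared_right a hp ht hw hw).mul
      (continuousAt_Efun_cons hp ht (ha 0) (ha 1) _ hw hzs)).div
      (by fun_prop (disch := simp [*])) (by rwa [← sq])
  · exact ((continuousAt_FplusCleared_left a hp ht ha hw hw hzs hw2 hwz).mul
      continuousAt_const).div (by fun_prop (disch := simp [*])) (by rwa [← sq])

lemma tendsto_theta_mul_Fminus_pair (hp : ‖p‖ < 1) (ht : t ≠ 0) (ha : ∀ m, a m ≠ 0) (hw : w ≠ 0)
    (hzs : ∀ j, zs j ≠ 0) (hw2 : theta p (w⁻¹ ^ 2) ≠ 0) (hwz : ∀ j, thetaPm p w⁻¹ (zs j) ≠ 0) :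
    Tendsto (fun z => theta p (z / w) *
        (Fminus p t a 0 (Fin.cons z (Fin.cons w zs)) * Efun p t (a 0) (a 1) (r - 1) (Fin.cons w zs) +
          Fminus p t a 1 (Fin.cons z (Fin.cons w zs)) * Efun p t (a 0) (a 1) (r - 1) (Fin.cons z zs)))
      (𝓝[≠] w) (𝓝 0) := by
  simp only [Fminus_cons_cons_zero, Fminus_cons_cons_one, Fplus_cons_cons_zero,
    Fplus_cons_cons_one]
  convert tendsto_theta_mul_add_div_theta hp hw
    (A := fun z => FplusCleared p t a z⁻¹ w zs * Efun p t (a 0) (a 1) (r - 1) (Fin.cons w zs) /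
      theta p (z⁻¹ * w⁻¹))
    (B := fun z => FplusCleared p t a w⁻¹ z zs * Efun p t (a 0) (a 1) (r - 1) (Fin.cons z zs) /
      theta p (w⁻¹ * z⁻¹)) ?_ ?_ rfl using 2 with z
  · rw [thetaPm, thetaPm, inv_mul_eq_div z w, inv_mul_eq_div w z]
    ring
  · exact (((continuousAt_FplusCleared_left a hp ht ha (inv_ne_zero hw) hw hzs hw2 hwz).comp
      (continuousAt_inv₀ hw)).mul continuousAt_const).div
      (by fun_prop (disch := simp [*])) (by rwa [← sq])
  · exact ((continuousAt_FplusCleared_right a hp ht (inv_ne_zero hw) hw).mul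
      (continuousAt_Efun_cons hp ht (ha 0) (ha 1) _ hw hzs)).div
      (by fun_prop (disch := simp [*])) (by rwa [← sq])

end Cleared

theorem h_no_pole_along_diagonal_general (n r : ℕ) (ε : Bool)
    (p t : ℂ) (a : Fin 6 → ℂ) (hp : ‖p‖ < 1) (ht : t ≠ 0)
    (ha : ∀ m, a m ≠ 0) (w : ℂ) (hw : w ≠ 0) (zs : Fin n → ℂ) (hzs : ∀ j, zs j ≠ 0)
    (hw2 : theta p (w ^ 2) ≠ 0) (hw2' : theta p ((w⁻¹) ^ 2) ≠ 0)
    (hwz : ∀ j : Fin n, thetaPm p w (zs j) ≠ 0 ∧ thetaPm p w⁻¹ (zs j) ≠ 0) :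
    Filter.Tendsto
      (fun z₁ : ℂ =>
        theta p (z₁ / w) *
          ((if ε then Fplus p t a (0 : Fin (n + 2)) (Fin.cons z₁ (Fin.cons w zs))
              else Fminus p t a (0 : Fin (n + 2)) (Fin.cons z₁ (Fin.cons w zs))) *
              Efun p t (a 0) (a 1) (r - 1) (Fin.cons w zs) +
            (if ε then Fplus p t a (1 : Fin (n + 2)) (Fin.cons z₁ (Fin.cons w zs))
              else Fminus p t a (1 : Fin (n + 2)) (Fin.cons z₁ (Fin.cons w zs))) *
              Efun p t (a 0) (a 1) (r - 1) (Fin.cons z₁ zs)))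
      (nhdsWithin w {w}ᶜ) (nhds 0) := by
  cases ε
  · exact tendsto_theta_mul_Fminus_pair a hp ht ha hw hzs hw2' fun j => (hwz j).2
  · exact tendsto_theta_mul_Fplus_pair a hp ht ha hw hzs hw2 fun j => (hwz j).1

/-- the regularity of `h_r` along `z₁ = z₂`: for `ε ∈ {+, -}`
(`ε = true` for `F^+`, `ε = false` for `F^-`), the function
`z₁ ↦ θ(z₁/w;p) (F₁^ε(z₁,w,z₃,…) E_{r-1}^{(n-1)}(w,z₃,…) + F₂^ε(z₁,w,z₃,…) E_{r-1}^{(n-1)}(z₁,z₃,…))`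
tends to `0` as `z₁ → w`.  (Here the number of variables is `n + 2 ≥ 2`.) -/
theorem h_no_pole_along_diagonal (n r : ℕ) (hr1 : 1 ≤ r) (hr2 : r ≤ n + 2) (ε : Bool)
    (p t : ℂ) (a : Fin 6 → ℂ) (hp : ‖p‖ < 1) (hp0 : p ≠ 0) (ht : t ≠ 0)
    (ha : ∀ m, a m ≠ 0) (w : ℂ) (hw : w ≠ 0) (zs : Fin n → ℂ) (hzs : ∀ j, zs j ≠ 0)
    (hgenE : eDenomsNZ p t (a 0) (a 1) (n + 1))
    (hw2 : theta p (w ^ 2) ≠ 0) (hw2' : theta p ((w⁻¹) ^ 2) ≠ 0)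
    (hwz : ∀ j : Fin n, thetaPm p w (zs j) ≠ 0 ∧ thetaPm p w⁻¹ (zs j) ≠ 0)
    (hzz : ∀ j k : Fin n, j ≠ k → thetaPm p (zs j) (zs k) ≠ 0)
    (hz2 : ∀ j : Fin n, theta p (zs j ^ 2) ≠ 0) :
    Filter.Tendsto
      (fun z₁ : ℂ =>
        theta p (z₁ / w) *
          ((if ε then Fplus p t a (0 : Fin (n + 2)) (Fin.cons z₁ (Fin.cons w zs))
              else Fminus p t a (0 : Fin (n + 2)) (Fin.cons z₁ (Fin.cons w zs))) *
              Efun p t (a 0) (a 1) (r - 1) (Fin.cons w zs) +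
            (if ε then Fplus p t a (1 : Fin (n + 2)) (Fin.cons z₁ (Fin.cons w zs))
              else Fminus p t a (1 : Fin (n + 2)) (Fin.cons z₁ (Fin.cons w zs))) *
              Efun p t (a 0) (a 1) (r - 1) (Fin.cons z₁ zs)))
      (nhdsWithin w {w}ᶜ) (nhds 0) :=
  h_no_pole_along_diagonal_general n r ε p t a hp ht ha w hw zs hzs hw2 hw2' hwz
end
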